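/- For every natural number n ≥ 3, the set of natural numbers m ≥ 3 such that the subfield of ℂ generated over ℚ by i·cos(π/m) is isomorphic as a field to the subfield of ℂ generated over ℚ by i·cos(π/n) is finite. -/

import Mathlib

/-!
A ring isomorphism of fields of characteristic zero is `ℚ`-linear, so `K_m ≅ K_n` forces
`[K_m : ℚ] = [K_n : ℚ]`. With `c = i cos(π/m)` and `ζ = exp(2πi/m)` one has
`ζ + ζ⁻¹ = -4c² - 2 ∈ K_m`, so `ζ` is a root of `X² - (ζ + ζ⁻¹) X + 1` over `K_m` and
`φ(m) = [ℚ(ζ) : ℚ] ≤ 2 [K_m : ℚ]`. Thus `φ(m)` is bounded on the set in question, and only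
finitely many `m` have bounded totient.
-/

/-- The invariant trace field `K n`: the subfield of `ℂ` generated over `ℚ`
by `i * cos (π / n)`. -/
noncomputable def pretzelTraceField (n : ℕ) : IntermediateField ℚ ℂ :=
  IntermediateField.adjoin ℚ {Complex.I * (Real.cos (Real.pi / n) : ℂ)}

open Complex IntermediateField Module Polynomial
open scoped Real

namespace Nat

theorem le_two_mul_totient_prime_pow {p : ℕ} (hp : p.Prime) (k : ℕ) : p ^ k ≤ 2 * φ (p ^ k) := by
  rcases k with _ | k
  · simp
  rw [totient_prime_pow_succ hp, pow_succ]
  calc p ^ k * p ≤ p ^ k * (2 * (p - 1)) := Nat.mul_le_mul_left _ (by have := hp.two_le; omega)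
    _ = 2 * (p ^ k * (p - 1)) := by ring

/-- Every prime power `p ^ k` exactly dividing `m` satisfies `p ^ k ≤ 2 φ(p ^ k) ≤ 2 φ(m)`,
so `φ m ≤ C` forces `m ∣ (2C)!`. -/
theorem finite_setOf_totient_le (C : ℕ) : {m : ℕ | φ m ≤ C}.Finite := by
  refine (Set.finite_Iic (2 * C)!).subset fun m (hm : φ m ≤ C) => ?_
  rcases eq_or_ne m 0 with rfl | hm0
  · exact Nat.zero_le _
  refine Nat.le_of_dvd (factorial_pos _) ?_
  rw [← factorization_le_iff_dvd hm0 (factorial_ne_zero _)]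
  intro p
  by_cases hp : p.Prime
  · rw [← hp.pow_dvd_iff_le_factorization (factorial_ne_zero _)]
    refine dvd_factorial (pow_pos hp.pos _) ?_
    calc p ^ m.factorization p ≤ 2 * φ (p ^ m.factorization p) := le_two_mul_totient_prime_pow hp _
      _ ≤ 2 * φ m := Nat.mul_le_mul_left _ <| Nat.le_of_dvd (totient_pos.2 (pos_of_ne_zero hm0))
          (totient_dvd_of_dvd (ordProj_dvd m p))
      _ ≤ 2 * C := Nat.mul_le_mul_left _ hm
  · simp [factorization_eq_zero_of_not_prime _ hp]

end Nat

namespace IntermediateField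

variable {K L : Type*} [Field K] [Field L] [Algebra K L]

theorem finrank_adjoin_simple_le_two_mul (F : IntermediateField K L) [FiniteDimensional K F]
    {x : L} (hx0 : x ≠ 0) (hx : x + x⁻¹ ∈ F) : finrank K K⟮x⟯ ≤ 2 * finrank K F := by
  set p : F[X] := X ^ 2 - C ⟨x + x⁻¹, hx⟩ * X + 1
  have hp : p.Monic := by unfold p; monicity!
  have hpx : aeval x p = 0 := by
    simp only [p, map_add, map_sub, map_mul, map_pow, aeval_X, aeval_C, map_one]
    change x ^ 2 - (x + x⁻¹) * x + 1 = 0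
    field_simp
    ring
  have hint : IsIntegral F x := ⟨p, hp, hpx⟩
  have : FiniteDimensional F F⟮x⟯ := adjoin.finiteDimensional hint
  have : Module.Free F F⟮x⟯ := .of_divisionRing F F⟮x⟯
  have : FiniteDimensional K (F⟮x⟯.restrictScalars K) := FiniteDimensional.trans K F F⟮x⟯
  have hquad : finrank F F⟮x⟯ ≤ 2 := by
    rw [adjoin.finrank hint]
    exact (natDegree_le_natDegree (minpoly.min F x hp hpx)).trans (by unfold p; compute_degree!)
  calc finrank K K⟮x⟯ ≤ finrank K (F⟮x⟯.restrictScalars K) :=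
        finrank_le_of_le_right (adjoin_simple_le_iff.2 (mem_adjoin_simple_self F x))
    _ = finrank K F * finrank F F⟮x⟯ := (finrank_mul_finrank K F F⟮x⟯).symm
    _ ≤ 2 * finrank K F := by rw [mul_comm]; exact Nat.mul_le_mul_right _ hquad

end IntermediateField

theorem isIntegral_I_mul_cos_pi_div (m : ℕ) : IsIntegral ℚ (I * (Real.cos (π / m) : ℂ)) := by
  have h2cos : IsIntegral ℚ (2 * cos ((1 / m : ℚ) * π)) :=
    (isIntegral_two_mul_cos_rat_mul_pi _).tower_top
  have : I * (Real.cos (π / m) : ℂ) = I * (2 * cos ((1 / m : ℚ) * π)) * algebraMap ℚ ℂ (1 / 2) := by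
    simp only [ofReal_cos, eq_ratCast]
    push_cast
    ring_nf
  rw [this]
  exact (isIntegral_rat_I.mul h2cos).mul isIntegral_algebraMap

instance (m : ℕ) : FiniteDimensional ℚ (pretzelTraceField m) :=
  adjoin.finiteDimensional (isIntegral_I_mul_cos_pi_div m)

theorem exp_add_inv_mem_pretzelTraceField (m : ℕ) :
    cexp (2 * π * I / m) + (cexp (2 * π * I / m))⁻¹ ∈ pretzelTraceField m := by
  have hc : I * (Real.cos (π / m) : ℂ) ∈ pretzelTraceField m := mem_adjoin_simple_self ℚ _
  have : cexp (2 * π * I / m) + (cexp (2 * π * I / m))⁻¹ = -4 * (I * Real.cos (π / m)) ^ 2 - 2 := by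
    rw [← exp_neg, show 2 * π * I / m = (2 * (π / m) : ℂ) * I by ring, ← neg_mul, ← two_cos,
      cos_two_mul, mul_pow, I_sq, ofReal_cos]
    push_cast
    ring
  rw [this]
  exact sub_mem (mul_mem (by simp) (pow_mem hc 2)) (by simp)

theorem totient_le_two_mul_finrank_pretzelTraceField {m : ℕ} (hm : m ≠ 0) :
    m.totient ≤ 2 * finrank ℚ (pretzelTraceField m) := by
  have hζ := isPrimitiveRoot_exp m hm
  calc m.totient = finrank ℚ ℚ⟮cexp (2 * π * I / m)⟯ := by
        rw [adjoin.finrank (hζ.isIntegral (Nat.pos_of_ne_zero hm)).tower_top,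
          ← cyclotomic_eq_minpoly_rat hζ (Nat.pos_of_ne_zero hm), natDegree_cyclotomic]
    _ ≤ _ := finrank_adjoin_simple_le_two_mul _ (exp_ne_zero _)
        (exp_add_inv_mem_pretzelTraceField m)

theorem finitely_many_isomorphic_pretzelTraceFields_general (n : ℕ) :
    {m : ℕ | 3 ≤ m ∧
      Nonempty (pretzelTraceField m ≃+* pretzelTraceField n)}.Finite := by
  refine (Nat.finite_setOf_totient_le (2 * finrank ℚ (pretzelTraceField n))).subset ?_
  rintro m ⟨hm, ⟨e⟩⟩
  calc m.totient ≤ 2 * finrank ℚ (pretzelTraceField m) :=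
        totient_le_two_mul_finrank_pretzelTraceField (by omega)
    _ = 2 * finrank ℚ (pretzelTraceField n) := by rw [e.toRatAlgEquiv.toLinearEquiv.finrank_eq]

theorem finitely_many_isomorphic_pretzelTraceFields (n : ℕ) (hn : 3 ≤ n) :
    {m : ℕ | 3 ≤ m ∧
      Nonempty (pretzelTraceField m ≃+* pretzelTraceField n)}.Finite :=
  finitely_many_isomorphic_pretzelTraceFields_general n
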